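/- arXiv:0910.2376 — 2 statements merged into one kernel-verified Lean document; each statement's English description precedes it below -/
import Mathlib

section
/- Let n ≥ 1, let σ ∈ C_{2n}(123), and let p with 1 ≤ p ≤ n be a left-to-right minimum position of σ. Then σ(p) ≥ max{ a : 1 ≤ a ≤ n and a ∉ {σ(j) : 1 ≤ j < p} ∪ {2n+1−σ(j) : 1 ≤ j < p} }. (The right-hand side is the middle element m(A) of the alphabet A of symbols not yet used, A being closed under the complementation a ↦ 2n+1−a.) -/
/-- The value of the permutation `σ` of `{1,…,N}` (modeled on `Fin N`) at a
1-indexed position `i` (so `pval σ i ∈ {1,…,N}` for `1 ≤ i ≤ N`). -/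
def pval {N : ℕ} (σ : Equiv.Perm (Fin N)) (i : ℕ) : ℕ :=
  if h : i - 1 < N then ((σ ⟨i - 1, h⟩ : ℕ) + 1) else 0

/-- `σ` is centrosymmetric: `σ(i) + σ(N+1−i) = N+1` for all `1 ≤ i ≤ N`. -/
def IsCentro {N : ℕ} (σ : Equiv.Perm (Fin N)) : Prop :=
  ∀ i, 1 ≤ i → i ≤ N → pval σ i + pval σ (N + 1 - i) = N + 1

/-- `σ` avoids the pattern 132. -/
def Avoids132 {N : ℕ} (σ : Equiv.Perm (Fin N)) : Prop :=
  ¬ ∃ i j k, 1 ≤ i ∧ i < j ∧ j < k ∧ k ≤ N ∧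
    pval σ i < pval σ k ∧ pval σ k < pval σ j

/-- `σ` avoids the pattern 123. -/
def Avoids123 {N : ℕ} (σ : Equiv.Perm (Fin N)) : Prop :=
  ¬ ∃ i j k, 1 ≤ i ∧ i < j ∧ j < k ∧ k ≤ N ∧
    pval σ i < pval σ j ∧ pval σ j < pval σ k

/-- The number of descents of `σ`: positions `1 ≤ i ≤ N−1` with `σ(i) > σ(i+1)`. -/
noncomputable def des {N : ℕ} (σ : Equiv.Perm (Fin N)) : ℕ :=
  Nat.card {i : ℕ // 1 ≤ i ∧ i + 1 ≤ N ∧ pval σ (i + 1) < pval σ i}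

/-!
If `σ(p) < a ≤ n` with `a` unused, then `a` and its complement `2n + 1 - a` both sit at
positions after `p`; centrosymmetry puts them at mirror positions `q` and `2n + 1 - q`, so
`q` lies strictly between `p` and its mirror `2n + 1 - p`. Then
`σ(p) < a < 2n + 1 - σ(p) = σ(2n + 1 - p)` is an occurrence of `123`.
-/

section Pval

variable {N : ℕ} (σ : Equiv.Perm (Fin N))

lemma pval_fin_succ (i : Fin N) : pval σ (i + 1) = σ i + 1 :=
  dif_pos i.isLt

lemma exists_pval_eq {v : ℕ} (hv : 1 ≤ v) (hvN : v ≤ N) :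
    ∃ q, 1 ≤ q ∧ q ≤ N ∧ pval σ q = v := by
  set i := σ.symm ⟨v - 1, by omega⟩
  refine ⟨i + 1, by omega, i.isLt, ?_⟩
  rw [pval_fin_succ, Equiv.apply_symm_apply, Fin.val_mk]
  omega

end Pval

lemma IsCentro.pval_mirror {N : ℕ} {σ : Equiv.Perm (Fin N)} (hσ : IsCentro σ) {i : ℕ}
    (hi : 1 ≤ i) (hiN : i ≤ N) : pval σ (N + 1 - i) = N + 1 - pval σ i := by
  have := hσ i hi hiN
  omega

lemma Avoids123.compl_le_pval_of_between {N : ℕ} {σ : Equiv.Perm (Fin N)} (hav : Avoids123 σ)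
    (hσ : IsCentro σ) {p r : ℕ} (hp : 1 ≤ p) (hpr : p < r) (hr : r < N + 1 - p)
    (hlt : pval σ p < pval σ r) : N + 1 - pval σ p ≤ pval σ r := by
  have hmirror := hσ.pval_mirror hp (by omega)
  by_contra! hgt
  exact hav ⟨p, r, N + 1 - p, hp, hpr, hr, by omega, hlt, by omega⟩

theorem stmt4_general (n : ℕ) (σ : Equiv.Perm (Fin (2 * n)))
    (hσ : IsCentro σ) (hav : Avoids123 σ)
    (p : ℕ) (hp1 : 1 ≤ p) (hp2 : p ≤ n) :
    ∀ a, 1 ≤ a → a ≤ n →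
      (∀ j, 1 ≤ j → j < p → a ≠ pval σ j ∧ a ≠ 2 * n + 1 - pval σ j) →
      a ≤ pval σ p := by
  intro a ha1 ha2 hfree
  by_contra! hlt
  obtain ⟨q, hq1, hq2, hqa⟩ := exists_pval_eq σ (v := a) ha1 (by omega)
  have hmirror := hσ.pval_mirror hq1 hq2
  have hpq : p < q := by
    by_contra! hqp
    rcases hqp.lt_or_eq with hqp | rfl
    · exact (hfree q hq1 hqp).1 hqa.symm
    · omega
  have hpq' : p < 2 * n + 1 - q := by
    by_contra! hqp
    rcases hqp.lt_or_eq with hqp | hqp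
    · exact (hfree _ (by omega) hqp).2 (by omega)
    · rw [hqp] at hmirror
      omega
  have := hav.compl_le_pval_of_between hσ hp1 hpq (by omega) (by omega)
  omega

/-- if `σ ∈ C_{2n}(123)` and `1 ≤ p ≤ n` is a left-to-right minimum
position, then `σ(p)` is at least every element `a ≤ n` of the alphabet of symbols not
yet used among `σ(1),…,σ(p−1)` and their complements, i.e. `σ(p) ≥ m(A)`. -/
theorem stmt4 (n : ℕ) (hn : 1 ≤ n) (σ : Equiv.Perm (Fin (2 * n)))
    (hσ : IsCentro σ) (hav : Avoids123 σ)
    (p : ℕ) (hp1 : 1 ≤ p) (hp2 : p ≤ n)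
    (hmin : ∀ j, 1 ≤ j → j < p → pval σ p < pval σ j) :
    ∀ a, 1 ≤ a → a ≤ n →
      (∀ j, 1 ≤ j → j < p → a ≠ pval σ j ∧ a ≠ 2 * n + 1 - pval σ j) →
      a ≤ pval σ p :=
  stmt4_general n σ hσ hav p hp1 hp2
end

section
/- Let n ≥ 1 and σ ∈ C_{2n+1}. Then σ avoids 123 if and only if {σ(n+2), σ(n+3), …, σ(2n+1)} = {1, 2, …, n} and the permutation of S_n given by the sequence σ(n+2), σ(n+3), …, σ(2n+1) avoids 123. (In this case σ(n+1) = n+1 and the values σ(1), …, σ(n) are determined by centrosymmetry.) -/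
/-!
In a centrosymmetric `σ ∈ S_{2n+1}` the middle value is `n+1`. If some value in the last `n`
positions exceeds `n`, it exceeds `n+1`, and its mirror image in the first `n` positions together
with the middle entry forms a `123`. So a `123`-avoiding `σ` maps the last block onto `{1,…,n}`;
then the first block carries the values `n+2,…,2n+1`, and an increasing triple can only sit inside
the last block or inside the first one, which reflects onto the last.
-/

section Pval

variable {N : ℕ} (σ : Equiv.Perm (Fin N))

lemma pval_of_le {i : ℕ} (h1 : 1 ≤ i) (h2 : i ≤ N) :
    pval σ i = (σ ⟨i - 1, by omega⟩ : ℕ) + 1 :=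
  dif_pos _

lemma one_le_pval {i : ℕ} (h1 : 1 ≤ i) (h2 : i ≤ N) : 1 ≤ pval σ i := by
  rw [pval_of_le σ h1 h2]
  omega

lemma pval_le {i : ℕ} (h1 : 1 ≤ i) (h2 : i ≤ N) : pval σ i ≤ N := by
  rw [pval_of_le σ h1 h2]
  exact (σ _).isLt

lemma pval_injOn : Set.InjOn (pval σ) (Set.Icc 1 N) := by
  rintro i ⟨hi1, hi2⟩ j ⟨hj1, hj2⟩ h
  rw [pval_of_le σ hi1 hi2, pval_of_le σ hj1 hj2, Nat.add_right_cancel_iff,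
    Fin.val_inj, σ.injective.eq_iff, Fin.mk.injEq] at h
  omega

lemma image_pval_Icc_eq_Icc_iff {m k : ℕ} (hmk : m + k ≤ N) :
    (Finset.Icc (m + 1) (m + k)).image (pval σ) = Finset.Icc 1 k ↔
      ∀ i, 1 ≤ i → i ≤ k → pval σ (m + i) ≤ k := by
  constructor
  · intro h i hi1 hi2
    have hmem : pval σ (m + i) ∈ Finset.Icc 1 k :=
      h ▸ Finset.mem_image_of_mem _ (Finset.mem_Icc.2 ⟨by omega, by omega⟩)
    exact (Finset.mem_Icc.1 hmem).2
  · intro h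
    have hinj : Set.InjOn (pval σ) (Finset.Icc (m + 1) (m + k)) := fun a ha b hb =>
      pval_injOn σ (by simp only [Finset.coe_Icc, Set.mem_Icc] at ha ⊢; omega)
        (by simp only [Finset.coe_Icc, Set.mem_Icc] at hb ⊢; omega)
    refine Finset.eq_of_subset_of_card_le (fun x hx => ?_) ?_
    · obtain ⟨p, hp, rfl⟩ := Finset.mem_image.1 hx
      obtain ⟨hp1, hp2⟩ := Finset.mem_Icc.1 hp
      have hle := h (p - m) (by omega) (by omega)
      rw [Nat.add_sub_cancel' (by omega)] at hle
      exact Finset.mem_Icc.2 ⟨one_le_pval σ (by omega) (by omega), hle⟩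
    · rw [Finset.card_image_of_injOn hinj, Nat.card_Icc, Nat.card_Icc]
      omega

lemma exists_perm_pval_eq_of_le {m k : ℕ} (hmk : m + k ≤ N)
    (h : ∀ i, 1 ≤ i → i ≤ k → pval σ (m + i) ≤ k) :
    ∃ τ : Equiv.Perm (Fin k), ∀ i, 1 ≤ i → i ≤ k → pval τ i = pval σ (m + i) := by
  have hval (i : Fin k) : 1 ≤ pval σ (m + (i + 1)) ∧ pval σ (m + (i + 1)) ≤ k :=
    ⟨one_le_pval σ (by omega) (by omega), h _ (by omega) i.isLt⟩
  let f : Fin k → Fin k := fun i => ⟨pval σ (m + (i + 1)) - 1, by have := hval i; omega⟩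
  have hf : Function.Injective f := by
    intro a b hab
    have ha := hval a
    have hb := hval b
    have := pval_injOn σ (⟨by omega, by omega⟩ : m + (a + 1) ∈ Set.Icc 1 N)
      (⟨by omega, by omega⟩ : m + (b + 1) ∈ Set.Icc 1 N)
      (by simp only [f, Fin.mk.injEq] at hab; omega)
    exact Fin.ext (by omega)
  refine ⟨Equiv.ofBijective f (Finite.injective_iff_bijective.1 hf), fun i hi1 hi2 => ?_⟩
  have hfi := hval ⟨i - 1, by omega⟩
  rw [pval_of_le _ hi1 hi2]
  simp only [Equiv.ofBijective_apply, f, Nat.sub_add_cancel hi1] at hfi ⊢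
  omega

end Pval

def Has123Between {N : ℕ} (σ : Equiv.Perm (Fin N)) (lo hi : ℕ) : Prop :=
  ∃ i j k, lo ≤ i ∧ i < j ∧ j < k ∧ k ≤ hi ∧ pval σ i < pval σ j ∧ pval σ j < pval σ k

section Has123Between

variable {N : ℕ} {σ : Equiv.Perm (Fin N)}

lemma avoids123_iff_not_has123Between : Avoids123 σ ↔ ¬ Has123Between σ 1 N :=
  Iff.rfl

lemma Has123Between.mono {lo hi lo' hi' : ℕ} (h : Has123Between σ lo' hi')
    (hlo : lo ≤ lo') (hhi : hi' ≤ hi) : Has123Between σ lo hi := by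
  obtain ⟨i, j, k, hi, hij, hjk, hk, h1, h2⟩ := h
  exact ⟨i, j, k, by omega, hij, hjk, by omega, h1, h2⟩

lemma has123Between_iff_of_pval_eq {m k : ℕ} {τ : Equiv.Perm (Fin k)}
    (h : ∀ i, 1 ≤ i → i ≤ k → pval τ i = pval σ (m + i)) :
    Has123Between τ 1 k ↔ Has123Between σ (m + 1) (m + k) := by
  constructor
  · rintro ⟨a, b, c, ha, hab, hbc, hc, h1, h2⟩
    rw [h a ha (by omega), h b (by omega) (by omega)] at h1
    rw [h b (by omega) (by omega), h c (by omega) hc] at h2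
    exact ⟨m + a, m + b, m + c, by omega, by omega, by omega, by omega, h1, h2⟩
  · rintro ⟨a, b, c, ha, hab, hbc, hc, h1, h2⟩
    obtain ⟨a, rfl⟩ := Nat.exists_eq_add_of_le (show m ≤ a by omega)
    obtain ⟨b, rfl⟩ := Nat.exists_eq_add_of_le (show m ≤ b by omega)
    obtain ⟨c, rfl⟩ := Nat.exists_eq_add_of_le (show m ≤ c by omega)
    rw [← h a (by omega) (by omega), ← h b (by omega) (by omega)] at h1
    rw [← h b (by omega) (by omega), ← h c (by omega) (by omega)] at h2
    exact ⟨a, b, c, by omega, by omega, by omega, by omega, h1, h2⟩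

end Has123Between

namespace IsCentro

section

variable {N : ℕ} {σ : Equiv.Perm (Fin N)}

lemma pval_reflect (hσ : IsCentro σ) {i : ℕ} (h1 : 1 ≤ i) (h2 : i ≤ N) :
    pval σ (N + 1 - i) = N + 1 - pval σ i := by
  have := hσ i h1 h2
  omega

lemma has123Between_reflect (hσ : IsCentro σ) {lo hi : ℕ} (hlo : 1 ≤ lo) (hhi : hi ≤ N)
    (h : Has123Between σ lo hi) : Has123Between σ (N + 1 - hi) (N + 1 - lo) := by
  obtain ⟨i, j, k, hi, hij, hjk, hk, h1, h2⟩ := h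
  have ri := hσ.pval_reflect (i := i) (by omega) (by omega)
  have rj := hσ.pval_reflect (i := j) (by omega) (by omega)
  have rk := hσ.pval_reflect (i := k) (by omega) (by omega)
  have bj := pval_le σ (i := j) (by omega) (by omega)
  have bk := pval_le σ (i := k) (by omega) (by omega)
  refine ⟨N + 1 - k, N + 1 - j, N + 1 - i, by omega, by omega, by omega, by omega, ?_, ?_⟩ <;>
    omega

end

section

variable {n : ℕ} {σ : Equiv.Perm (Fin (2 * n + 1))}

lemma pval_middle (hσ : IsCentro σ) : pval σ (n + 1) = n + 1 := by
  have := hσ (n + 1) (by omega) (by omega)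
  rw [show 2 * n + 1 + 1 - (n + 1) = n + 1 by omega] at this
  omega

lemma pval_upper_le_of_avoids123 (hσ : IsCentro σ) (hA : Avoids123 σ) {i : ℕ}
    (h1 : 1 ≤ i) (h2 : i ≤ n) : pval σ (n + 1 + i) ≤ n := by
  by_contra hgt
  have hne : pval σ (n + 1 + i) ≠ n + 1 := fun he => by
    have := pval_injOn σ (⟨by omega, by omega⟩ : n + 1 + i ∈ Set.Icc 1 (2 * n + 1))
      (⟨by omega, by omega⟩ : n + 1 ∈ Set.Icc 1 (2 * n + 1)) (he.trans hσ.pval_middle.symm)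
    omega
  have hr := hσ.pval_reflect (i := n + 1 + i) (by omega) (by omega)
  have hb := pval_le σ (i := n + 1 + i) (by omega) (by omega)
  rw [show 2 * n + 1 + 1 - (n + 1 + i) = n + 1 - i by omega] at hr
  exact hA ⟨n + 1 - i, n + 1, n + 1 + i, by omega, by omega, by omega, by omega,
    by rw [hr, hσ.pval_middle]; omega, by rw [hσ.pval_middle]; omega⟩

lemma pval_lower_ge (hσ : IsCentro σ) (hle : ∀ i, 1 ≤ i → i ≤ n → pval σ (n + 1 + i) ≤ n)
    {i : ℕ} (h1 : 1 ≤ i) (h2 : i ≤ n) : n + 2 ≤ pval σ i := by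
  have hr := hσ i h1 (by omega)
  have hup := hle (n + 1 - i) (by omega) (by omega)
  rw [show 2 * n + 1 + 1 - i = n + 1 + (n + 1 - i) by omega] at hr
  omega

lemma has123Between_upper (hσ : IsCentro σ)
    (hle : ∀ i, 1 ≤ i → i ≤ n → pval σ (n + 1 + i) ≤ n) (h : Has123Between σ 1 (2 * n + 1)) :
    Has123Between σ (n + 2) (2 * n + 1) := by
  obtain ⟨i, j, k, hi1, hij, hjk, hk, h1, h2⟩ := h
  by_cases hin : n + 2 ≤ i
  · exact ⟨i, j, k, hin, hij, hjk, hk, h1, h2⟩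
  have hvi : n + 1 ≤ pval σ i := by
    rcases Nat.lt_or_ge i (n + 1) with hlt | hge
    · have := hσ.pval_lower_ge hle hi1 (by omega : i ≤ n)
      omega
    · rw [show i = n + 1 by omega, hσ.pval_middle]
  have hkn : k ≤ n := by
    by_contra hkn
    rcases Nat.lt_or_ge k (n + 2) with hmid | hup
    · rw [show k = n + 1 by omega, hσ.pval_middle] at h2
      omega
    · have := hle (k - (n + 1)) (by omega) (by omega)
      rw [Nat.add_sub_cancel' (by omega)] at this
      omega
  have hr := hσ.has123Between_reflect (lo := i) (hi := k) hi1 hk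
    ⟨i, j, k, le_rfl, hij, hjk, le_rfl, h1, h2⟩
  exact hr.mono (by omega) (by omega)

end

end IsCentro

theorem stmt18_general (n : ℕ) (σ : Equiv.Perm (Fin (2 * n + 1))) (hσ : IsCentro σ) :
    Avoids123 σ ↔
      ((Finset.Icc (n + 2) (2 * n + 1)).image (pval σ) = Finset.Icc 1 n) ∧
      (∃ τ : Equiv.Perm (Fin n),
        (∀ i, 1 ≤ i → i ≤ n → pval τ i = pval σ (n + 1 + i)) ∧ Avoids123 τ) := by
  have himg : (Finset.Icc (n + 2) (2 * n + 1)).image (pval σ) = Finset.Icc 1 n ↔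
      ∀ i, 1 ≤ i → i ≤ n → pval σ (n + 1 + i) ≤ n := by
    rw [show Finset.Icc (n + 2) (2 * n + 1) = Finset.Icc (n + 1 + 1) (n + 1 + n) by
      congr 1; omega]
    exact image_pval_Icc_eq_Icc_iff σ (by omega)
  have hblock {τ : Equiv.Perm (Fin n)} (hτ : ∀ i, 1 ≤ i → i ≤ n → pval τ i = pval σ (n + 1 + i)) :
      Avoids123 τ ↔ ¬ Has123Between σ (n + 2) (2 * n + 1) := by
    rw [avoids123_iff_not_has123Between, has123Between_iff_of_pval_eq hτ,
      show n + 1 + n = 2 * n + 1 by omega]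
  constructor
  · intro hA
    have hle i := hσ.pval_upper_le_of_avoids123 hA (i := i)
    obtain ⟨τ, hτ⟩ := exists_perm_pval_eq_of_le σ (by omega) hle
    exact ⟨himg.2 hle, τ, hτ, (hblock hτ).2 fun h => hA (h.mono (by omega) le_rfl)⟩
  · rintro ⟨hbij, τ, hτ, hτA⟩ hA
    exact (hblock hτ).1 hτA (hσ.has123Between_upper (himg.1 hbij) hA)

/-- a centrosymmetric `σ ∈ S_{2n+1}` avoids 123 iff
`{σ(n+2),…,σ(2n+1)} = {1,…,n}` and the permutation of `S_n` given by the sequence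
`σ(n+2),…,σ(2n+1)` avoids 123. -/
theorem stmt18 (n : ℕ) (hn : 1 ≤ n) (σ : Equiv.Perm (Fin (2 * n + 1))) (hσ : IsCentro σ) :
    Avoids123 σ ↔
      ((Finset.Icc (n + 2) (2 * n + 1)).image (pval σ) = Finset.Icc 1 n) ∧
      (∃ τ : Equiv.Perm (Fin n),
        (∀ i, 1 ≤ i → i ≤ n → pval τ i = pval σ (n + 1 + i)) ∧ Avoids123 τ) :=
  stmt18_general n σ hσ
end
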